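/- arXiv:2501.05049 — 3 statements merged into one kernel-verified Lean document; each statement's English description precedes it below -/
import Mathlib

section
/- A finite simple graph G = (V,E) on n vertices is an interval-order graph if and only if there is an ordering (v_1, …, v_n) of V such that for all indices i > j one has N⁺(v_i) ⊆ N⁺(v_j), where N⁺(v_l) = {v_m : v_l v_m ∈ E and l < m}. -/
/-!
Give each vertex `v` an interval `[a v, b v]`; `G` is the complement of the intersection graph
exactly when `u ~ v ↔ b u < a v ∨ b v < a u`. Listing the vertices by increasing right endpoint,
a forward neighbour `w` of `v` starts after `b v`, hence after the right endpoint of every earlier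
vertex, so the forward neighbourhoods shrink. Conversely, along such an ordering the earlier
neighbours of the `m`-th vertex are exactly the first `d m` vertices, where `d m` is their number,
so the intervals `[d m, m]` represent the complement of `G`.
-/

/-- An assignment of axis-parallel boxes in `ℝ^d` (given coordinate-wise, as `d` nonempty closed
intervals per vertex) representing the graph `G`: two distinct vertices are adjacent iff their
boxes intersect, i.e. iff the intervals intersect in every coordinate. -/
def SimpleGraph.IsBoxRep {V : Type*} (G : SimpleGraph V) (d : ℕ) (I : V → Fin d → Set ℝ) : Prop :=
  (∀ v i, ∃ a b : ℝ, a ≤ b ∧ I v i = Set.Icc a b) ∧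
  ∀ u v : V, u ≠ v → (G.Adj u v ↔ ∀ i, (I u i ∩ I v i).Nonempty)

/-- The boxicity of a graph: the least dimension `d` such that `G` has a representation by
axis-parallel boxes in `ℝ^d`. -/
noncomputable def SimpleGraph.boxicity {V : Type*} (G : SimpleGraph V) : ℕ :=
  sInf {d : ℕ | ∃ I : V → Fin d → Set ℝ, G.IsBoxRep d I}

/-- `G` is an interval graph: its vertices can be assigned nonempty closed real intervals so that
two distinct vertices are adjacent iff their intervals intersect. -/
def SimpleGraph.IsIntervalGraph {V : Type*} (G : SimpleGraph V) : Prop :=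
  ∃ I : V → Set ℝ, (∀ v, ∃ a b : ℝ, a ≤ b ∧ I v = Set.Icc a b) ∧
    ∀ u v : V, u ≠ v → (G.Adj u v ↔ (I u ∩ I v).Nonempty)

/-- An interval-order graph is the complement of an interval graph. -/
def SimpleGraph.IsIntervalOrderGraph {V : Type*} (G : SimpleGraph V) : Prop :=
  Gᶜ.IsIntervalGraph

open Finset

theorem Set.Icc_inter_Icc_nonempty_iff {α : Type*} [LinearOrder α] {a b c d : α}
    (hab : a ≤ b) (hcd : c ≤ d) : (Set.Icc a b ∩ Set.Icc c d).Nonempty ↔ a ≤ d ∧ c ≤ b := by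
  rw [Set.Icc_inter_Icc, Set.nonempty_Icc, sup_le_iff, le_inf_iff, le_inf_iff]
  tauto

theorem Fintype.exists_equiv_fin_monotone {V α : Type*} [Fintype V] [LinearOrder α] {n : ℕ}
    (hn : Fintype.card V = n) (b : V → α) : ∃ σ : Fin n ≃ V, Monotone (b ∘ σ) :=
  let e := (Fintype.equivFinOfCardEq hn).symm
  ⟨(Tuple.sort (b ∘ e)).trans e, Tuple.monotone_sort (b ∘ e)⟩

namespace SimpleGraph

variable {V : Type*} {G : SimpleGraph V}

theorem isIntervalOrderGraph_iff_exists_endpoints :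
    G.IsIntervalOrderGraph ↔
      ∃ a b : V → ℝ, (∀ v, a v ≤ b v) ∧ ∀ u v, G.Adj u v ↔ b u < a v ∨ b v < a u := by
  constructor
  · rintro ⟨I, hI, hcompl⟩
    choose a b hab hI using hI
    refine ⟨a, b, hab, fun u v => ?_⟩
    rcases eq_or_ne u v with rfl | huv
    · simpa using hab u
    · have h := hcompl u v huv
      rw [compl_adj, hI, hI, Set.Icc_inter_Icc_nonempty_iff (hab u) (hab v)] at h
      grind
  · rintro ⟨a, b, hab, hadj⟩
    refine ⟨fun v => Set.Icc (a v) (b v), fun v => ⟨a v, b v, hab v, rfl⟩, fun u v huv => ?_⟩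
    rw [compl_adj, Set.Icc_inter_Icc_nonempty_iff (hab u) (hab v), hadj]
    grind

section Ordering

variable {ι : Type*}

/-- The paper's `N⁺(f i)`. -/
def forwardNeighborSet [LT ι] (G : SimpleGraph V) (f : ι → V) (i : ι) : Set V :=
  {w | ∃ m, w = f m ∧ i < m ∧ G.Adj (f i) w}

theorem adj_of_antitone_forwardNeighborSet [Preorder ι] {f : ι → V}
    (hf : Antitone (G.forwardNeighborSet f)) {j i m : ι} (hji : j < i) (him : i < m)
    (hadj : G.Adj (f i) (f m)) : G.Adj (f j) (f m) := by
  obtain ⟨-, -, -, hadj'⟩ := hf hji.le ⟨m, rfl, him, hadj⟩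
  exact hadj'

theorem antitone_forwardNeighborSet_of_monotone [Preorder ι] {α : Type*} [LinearOrder α]
    {a b : V → α} (hab : ∀ v, a v ≤ b v)
    (hadj : ∀ u v, G.Adj u v ↔ b u < a v ∨ b v < a u) {f : ι → V} (hf : Monotone (b ∘ f)) :
    Antitone (G.forwardNeighborSet f) := by
  intro j i hji w hw
  obtain ⟨m, rfl, him, hadj_im⟩ := hw
  have hbi : b (f i) < a (f m) := by
    have hbim : b (f i) ≤ b (f m) := hf him.le
    refine ((hadj _ _).1 hadj_im).resolve_right fun h => ?_
    exact lt_irrefl _ (h.trans_le ((hab _).trans hbim))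
  refine ⟨m, rfl, hji.trans_lt him, (hadj _ _).2 (Or.inl ?_)⟩
  exact (hf hji).trans_lt hbi

end Ordering

def backwardDegree (G : SimpleGraph V) [DecidableRel G.Adj] {n : ℕ} (σ : Fin n → V) (m : Fin n) :
    ℕ :=
  #{j | j < m ∧ G.Adj (σ j) (σ m)}

section BackwardDegree

variable {n : ℕ} [DecidableRel G.Adj]

theorem backwardDegree_le (σ : Fin n → V) (m : Fin n) : G.backwardDegree σ m ≤ m := by
  rw [backwardDegree, ← Fin.card_Iio]
  exact card_le_card fun j hj => Finset.mem_Iio.2 (Finset.mem_filter.1 hj).2.1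

theorem adj_iff_lt_backwardDegree {σ : Fin n → V} (hσ : Antitone (G.forwardNeighborSet σ))
    {i m : Fin n} (him : i ≤ m) : G.Adj (σ i) (σ m) ↔ (i : ℕ) < G.backwardDegree σ m := by
  rw [backwardDegree, Fin.lt_card_filter_univ_iff_apply_of_imp]
  · refine ⟨fun h => ⟨him.lt_of_ne ?_, h⟩, And.right⟩
    rintro rfl
    exact h.ne rfl
  · rintro k j hjk ⟨hkm, hadj⟩
    rcases hjk.lt_or_eq with hjk | rfl
    · exact ⟨hjk.trans hkm, adj_of_antitone_forwardNeighborSet hσ hjk hkm hadj⟩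
    · exact ⟨hkm, hadj⟩

end BackwardDegree

theorem exists_endpoints_of_antitone_forwardNeighborSet {n : ℕ} {σ : Fin n ≃ V}
    (hσ : Antitone (G.forwardNeighborSet σ)) :
    ∃ a b : V → ℕ, (∀ v, a v ≤ b v) ∧ ∀ u v, G.Adj u v ↔ b u < a v ∨ b v < a u := by
  classical
  refine ⟨fun v => G.backwardDegree σ (σ.symm v), fun v => σ.symm v,
    fun v => backwardDegree_le _ _, fun u v => ?_⟩
  obtain ⟨i, rfl⟩ := σ.surjective u
  obtain ⟨m, rfl⟩ := σ.surjective v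
  simp only [Equiv.symm_apply_apply]
  have hi := backwardDegree_le (G := G) σ i
  have hm := backwardDegree_le (G := G) σ m
  rcases le_total i m with him | hmi
  · rw [adj_iff_lt_backwardDegree hσ him]
    omega
  · rw [G.adj_comm, adj_iff_lt_backwardDegree hσ hmi]
    omega

end SimpleGraph

open SimpleGraph in
/-- A graph on `n` vertices is an interval-order graph iff its vertices admit an ordering
`(v_1, …, v_n)` such that `i > j` implies `N⁺(v_i) ⊆ N⁺(v_j)`, where
`N⁺(v_l) = {v_m : v_l v_m ∈ E, l < m}`. -/
theorem isIntervalOrderGraph_iff_ordering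
    {V : Type*} [Fintype V] (G : SimpleGraph V) (n : ℕ) (hn : Fintype.card V = n) :
    G.IsIntervalOrderGraph ↔ ∃ σ : Fin n ≃ V, ∀ i j : Fin n, j < i →
      {w : V | ∃ m : Fin n, w = σ m ∧ i < m ∧ G.Adj (σ i) w} ⊆
        {w : V | ∃ m : Fin n, w = σ m ∧ j < m ∧ G.Adj (σ j) w} := by
  rw [isIntervalOrderGraph_iff_exists_endpoints]
  constructor
  · rintro ⟨a, b, hab, hadj⟩
    obtain ⟨σ, hσ⟩ := Fintype.exists_equiv_fin_monotone hn b
    have hanti := antitone_forwardNeighborSet_of_monotone hab hadj hσ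
    exact ⟨σ, fun i j hji => hanti hji.le⟩
  · rintro ⟨σ, hσ⟩
    have hanti : Antitone (G.forwardNeighborSet σ) :=
      antitone_iff_forall_lt.2 fun j i hji => hσ i j hji
    obtain ⟨a, b, hab, hadj⟩ := exists_endpoints_of_antitone_forwardNeighborSet hanti
    exact ⟨fun v => a v, fun v => b v, fun v => Nat.cast_le.2 (hab v),
      fun u v => by simpa only [Nat.cast_lt] using hadj u v⟩
end

section
/- The boxicity of the complement of the line graph L(K_5) is at least 3. -/
/-!
In a box representation of `L(K₅)ᶜ` in the plane, each coordinate assigns intervals to the ten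
edges of `K₅` such that disjoint edges get overlapping intervals, and two edges `xy`, `xz` sharing
a letter are separated in one of the coordinates. In one coordinate, "the interval of `xy` lies
left of that of `xz`" holds for at most one apex `x` once `y → z` is fixed, since separations
`a < b`, `c < d` of intervals force `a < d` or `c < b`. As a pair `{y, z}` has three apexes, it is
separated in both coordinates, and in both directions in one of them. Now in a coordinate where
every pair is separated, the pairs separated in both directions form a bipartite graph on the
five letters; this is checked by running through the orders of the edges by right endpoint, after
relabelling the letters so that the edge `{0, 1}` comes first. But `K₅` is not the union of two
bipartite graphs.
-/

open Set

namespace SimpleGraph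

variable {V : Type*} {G : SimpleGraph V}

theorem IsBoxRep.exists_of_le {d e : ℕ} {I : V → Fin d → Set ℝ} (h : G.IsBoxRep d I)
    (hde : d ≤ e) : ∃ J : V → Fin e → Set ℝ, G.IsBoxRep e J := by
  classical
  refine ⟨fun v i => if hi : (i : ℕ) < d then I v ⟨i, hi⟩ else Icc 0 0, fun v i => ?_,
    fun u v huv => ?_⟩
  · by_cases hi : (i : ℕ) < d
    · simpa [hi] using h.1 v ⟨i, hi⟩
    · exact ⟨0, 0, le_rfl, by simp [hi]⟩
  · rw [h.2 u v huv]
    constructor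
    · intro hall i
      by_cases hi : (i : ℕ) < d
      · simpa [hi] using hall ⟨i, hi⟩
      · simp [hi]
    · intro hall i
      simpa using hall (Fin.castLE hde i)

theorem exists_isBoxRep [Finite V] : ∃ d I, G.IsBoxRep d I := by
  classical
  have := Fintype.ofFinite V
  -- one coordinate for each ordered non-adjacent pair `(a, b)`, with `a ↦ {0}`, `b ↦ {1}` and
  -- every other vertex `↦ [0, 1]`
  let P := {p : V × V // p.1 ≠ p.2 ∧ ¬G.Adj p.1 p.2}
  let box (v : V) (p : P) : Set ℝ :=
    Icc (if v = p.1.2 then 1 else 0) (if v = p.1.1 then 0 else 1)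
  have box_inter (u v : V) (huv : u ≠ v) (hadj : G.Adj u v) (p : P) :
      (box u p ∩ box v p).Nonempty := by
    obtain ⟨⟨a, b⟩, hab, hnadj⟩ := p
    by_cases hua : u = a
    · subst hua
      have hvb : v ≠ b := by rintro rfl; exact hnadj hadj
      exact ⟨0, by simp [box, hab, huv.symm, hvb]⟩
    by_cases hva : v = a
    · subst hva
      have hub : u ≠ b := by rintro rfl; exact hnadj hadj.symm
      exact ⟨0, by simp [box, hab, huv, hub]⟩
    exact ⟨1, by simp only [box, if_neg hua, if_neg hva]; split_ifs <;> norm_num⟩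
  let e := Fintype.equivFin P
  refine ⟨_, fun v i => box v (e.symm i), fun v i => ⟨_, _, ?_, rfl⟩, fun u v huv =>
    ⟨fun hadj i => box_inter u v huv hadj _, fun hall => ?_⟩⟩
  · have := (e.symm i).2.1
    split_ifs with h1 h2 <;> first | exact (this (h2.symm.trans h1)).elim | norm_num
  · by_contra hnadj
    obtain ⟨x, hxu, hxv⟩ := hall (e ⟨(u, v), huv, hnadj⟩)
    simp [box, huv, huv.symm] at hxu hxv
    linarith

theorem exists_isBoxRep_boxicity [Finite V] : ∃ I, G.IsBoxRep G.boxicity I :=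
  Nat.sInf_mem exists_isBoxRep

theorem IsBoxRep.exists_endpoints {d : ℕ} {I : V → Fin d → Set ℝ} (h : G.IsBoxRep d I) :
    ∃ l u : V → Fin d → ℝ, (∀ v i, l v i ≤ u v i) ∧
      ∀ a b, a ≠ b → (G.Adj a b ↔ ∀ i, l a i ≤ u b i ∧ l b i ≤ u a i) := by
  choose l u hlu hI using h.1
  refine ⟨l, u, hlu, fun a b hab => ?_⟩
  rw [h.2 a b hab]
  refine forall_congr' fun i => ?_
  simp only [hI, Icc_inter_Icc, nonempty_Icc, max_le_iff, le_min_iff]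
  have := hlu a i
  have := hlu b i
  tauto

end SimpleGraph

namespace Petersen

open SimpleGraph

/-- One coordinate of a box representation of `L(K₅)ᶜ`: an interval `[l e, u e]` for every
edge `e` of `K₅` (values on the diagonal of `Sym2 (Fin 5)` are never used), such that disjoint
edges, which are adjacent in `L(K₅)ᶜ`, get overlapping intervals. -/
structure Layer where
  l : Sym2 (Fin 5) → ℝ
  u : Sym2 (Fin 5) → ℝ
  l_le_u : ∀ e, l e ≤ u e
  overlap : ∀ x y z w : Fin 5, x ≠ y → x ≠ z → x ≠ w → y ≠ z → y ≠ w → z ≠ w →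
    l s(x, y) ≤ u s(z, w)

namespace Layer

variable (L : Layer)

def SepAt (x y z : Fin 5) : Prop := L.u s(x, y) < L.l s(x, z)

def Sep (y z : Fin 5) : Prop := ∃ x, x ≠ y ∧ x ≠ z ∧ L.SepAt x y z

theorem not_sep_self (y : Fin 5) : ¬L.Sep y y := fun ⟨_, _, _, h⟩ => (L.l_le_u _).not_gt h

def twoWayGraph : SimpleGraph (Fin 5) where
  Adj y z := L.Sep y z ∧ L.Sep z y
  symm := ⟨fun _ _ h => h.symm⟩
  loopless := ⟨fun y h => L.not_sep_self y h.1⟩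

def comap (σ : Equiv.Perm (Fin 5)) : Layer where
  l e := L.l (e.map σ)
  u e := L.u (e.map σ)
  l_le_u _ := L.l_le_u _
  overlap x y z w hxy hxz hxw hyz hyw hzw := by
    simpa using L.overlap _ _ _ _ (σ.injective.ne hxy) (σ.injective.ne hxz)
      (σ.injective.ne hxw) (σ.injective.ne hyz) (σ.injective.ne hyw) (σ.injective.ne hzw)

variable {L}

/-- If interval `a` lies left of `b` and `c` left of `d`, then `a` lies left of `d` or `c` left
of `b`; here `xy, wz` and `wy, xz` are pairs of disjoint edges, whose intervals overlap. -/
theorem eq_of_sepAt {x w y z : Fin 5} (hxy : x ≠ y) (hxz : x ≠ z) (hwy : w ≠ y) (hwz : w ≠ z)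
    (hyz : y ≠ z) (hx : L.SepAt x y z) (hw : L.SepAt w y z) : x = w := by
  by_contra hxw
  rcases le_total (L.u s(x, y)) (L.u s(w, y)) with h | h
  · exact (L.overlap w z x y hwz (Ne.symm hxw) hwy hxz.symm hyz.symm hxy).not_gt (h.trans_lt hw)
  · exact (L.overlap x z w y hxz hxw hxy hwz.symm hyz.symm hwy).not_gt (h.trans_lt hx)

theorem eq_of_sepAt_or {x w y z : Fin 5} (hyz : y ≠ z) (hadj : ¬L.twoWayGraph.Adj y z)
    (hx : x ≠ y ∧ x ≠ z ∧ (L.SepAt x y z ∨ L.SepAt x z y))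
    (hw : w ≠ y ∧ w ≠ z ∧ (L.SepAt w y z ∨ L.SepAt w z y)) : x = w := by
  obtain ⟨hxy, hxz, hx⟩ := hx
  obtain ⟨hwy, hwz, hw⟩ := hw
  rcases hx with hx | hx <;> rcases hw with hw | hw
  · exact L.eq_of_sepAt hxy hxz hwy hwz hyz hx hw
  · exact absurd ⟨⟨x, hxy, hxz, hx⟩, ⟨w, hwz, hwy, hw⟩⟩ hadj
  · exact absurd ⟨⟨w, hwy, hwz, hw⟩, ⟨x, hxz, hxy, hx⟩⟩ hadj
  · exact L.eq_of_sepAt hxz hxy hwz hwy hyz.symm hx hw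

theorem sep_comap {σ : Equiv.Perm (Fin 5)} {y z : Fin 5} :
    (L.comap σ).Sep y z ↔ L.Sep (σ y) (σ z) := by
  constructor
  · rintro ⟨x, hxy, hxz, h⟩
    exact ⟨σ x, σ.injective.ne hxy, σ.injective.ne hxz, by simpa [SepAt, comap] using h⟩
  · rintro ⟨x, hxy, hxz, h⟩
    refine ⟨σ.symm x, ?_, ?_, by simpa [SepAt, comap] using h⟩
    · rintro rfl; simp at hxy
    · rintro rfl; simp at hxz

def twoWayGraphComapIso (σ : Equiv.Perm (Fin 5)) :
    L.twoWayGraph ≃g (L.comap σ).twoWayGraph where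
  toEquiv := σ.symm
  map_rel_iff' := by simp [twoWayGraph, sep_comap]

end Layer

/-! The edge `{x, y}` of `K₅`, `x < y`, is coded by `5 * x + y`; sets of codes, and sets of
ordered pairs `(y, z)` of letters coded by `5 * y + z`, are bit masks. -/

def fst (k : ℕ) : Fin 5 := Fin.ofNat 5 (k / 5)

def snd (k : ℕ) : Fin 5 := Fin.ofNat 5 (k % 5)

def edge (k : ℕ) : Sym2 (Fin 5) := s(fst k, snd k)

def codes : List ℕ := [1, 2, 3, 4, 7, 8, 9, 13, 14, 19]

def code (x y : Fin 5) : ℕ := 5 * min x.val y.val + max x.val y.val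

def Meets (a b : ℕ) : Prop :=
  a ≠ b ∧ (a / 5 = b / 5 ∨ a / 5 = b % 5 ∨ a % 5 = b / 5 ∨ a % 5 = b % 5)

instance : DecidableRel Meets := fun _ _ => by unfold Meets; infer_instance

/-- For meeting edges `a = {x, y}` and `b = {x, z}`, the code `5 * y + z` of `(y, z)`. -/
def dir (a b : ℕ) : ℕ :=
  if a / 5 = b / 5 then 5 * (a % 5) + b % 5
  else if a / 5 = b % 5 then 5 * (a % 5) + b / 5
  else if a % 5 = b / 5 then 5 * (a / 5) + b % 5
  else 5 * (a / 5) + b / 5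

theorem fst_ne_snd : ∀ a ∈ codes, fst a ≠ snd a := by decide

theorem code_mem : ∀ x y : Fin 5, x ≠ y → code x y ∈ codes := by decide

theorem edge_code : ∀ x y : Fin 5, edge (code x y) = s(x, y) := by decide

theorem dir_code : ∀ x y z : Fin 5, x ≠ y → x ≠ z → y ≠ z →
    dir (code x y) (code x z) = 5 * y.val + z.val := by
  decide

theorem letters_ne_of_not_meets : ∀ a ∈ codes, ∀ b ∈ codes, a ≠ b → ¬Meets a b →
    fst b ≠ snd b ∧ fst b ≠ fst a ∧ fst b ≠ snd a ∧ snd b ≠ fst a ∧ snd b ≠ snd a ∧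
      fst a ≠ snd a := by
  decide

def maskOf (l : List ℕ) (P : ℕ → Prop) [DecidablePred P] (f : ℕ → ℕ) : ℕ :=
  l.foldl (fun t b => if P b then t ||| 1 <<< f b else t) 0

theorem testBit_maskOf {l : List ℕ} {P : ℕ → Prop} [DecidablePred P] {f : ℕ → ℕ} {k : ℕ} :
    (maskOf l P f).testBit k = true ↔ ∃ b ∈ l, P b ∧ f b = k := by
  suffices ∀ t, (l.foldl (fun t b => if P b then t ||| 1 <<< f b else t) t).testBit k = true ↔
      t.testBit k = true ∨ ∃ b ∈ l, P b ∧ f b = k by simpa [maskOf] using this 0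
  induction l with
  | nil => simp
  | cons a l ih =>
    intro t
    rw [List.foldl_cons, ih]
    split_ifs with h <;> simp [Nat.one_shiftLeft, Nat.testBit_two_pow, h, or_assoc]

def allCodes : ℕ := maskOf codes (fun _ => True) id

def nbr (a : ℕ) : ℕ := maskOf codes (Meets a) id

def dirsFrom (a B : ℕ) : ℕ := maskOf codes (fun b => B.testBit b) (dir a)

def dirsTo (a B : ℕ) : ℕ := maskOf codes (fun b => B.testBit b) (dir · a)

def offDiag : ℕ := maskOf (List.range 25) (fun k => k / 5 ≠ k % 5) id

def sameColor (c : ℕ) : ℕ :=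
  maskOf (List.range 25) (fun k => c.testBit (k / 5) = c.testBit (k % 5)) id

def twoWayColorable (m mT : ℕ) : Bool :=
  (m ||| mT) &&& offDiag != offDiag || (List.range 16).any fun c => m &&& mT &&& sameColor c == 0

theorem exists_coloring_of_twoWayColorable {m mT : ℕ} (h : twoWayColorable m mT = true)
    (htot : ∀ y z : Fin 5, y ≠ z → (m ||| mT).testBit (5 * y.val + z.val) = true) :
    ∃ c : Fin 5 → Bool,
      ∀ y z : Fin 5, (m &&& mT).testBit (5 * y.val + z.val) = true → c y ≠ c z := by
  simp only [twoWayColorable, Bool.or_eq_true, bne_iff_ne, ne_eq, List.any_eq_true,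
    List.mem_range, beq_iff_eq] at h
  rcases h with h | ⟨c, -, hc⟩
  · refine absurd (Nat.eq_of_testBit_eq fun k => ?_) h
    rw [Nat.testBit_and]
    cases hk : offDiag.testBit k
    · simp
    · obtain ⟨k, hk25, hkne, rfl⟩ := testBit_maskOf.mp hk
      rw [List.mem_range] at hk25
      have hy : (Fin.ofNat 5 (k / 5)).val = k / 5 := by simp only [Fin.val_ofNat]; omega
      have hz : (Fin.ofNat 5 (k % 5)).val = k % 5 := by simp only [Fin.val_ofNat]; omega
      have := htot (Fin.ofNat 5 (k / 5)) (Fin.ofNat 5 (k % 5))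
        fun h => hkne (by rw [← hy, ← hz, h])
      rw [hy, hz, Nat.div_add_mod] at this
      simp [this]
  · refine ⟨fun y => c.testBit y, fun y z hyz heq => ?_⟩
    have hdiv : (5 * y.val + z.val) / 5 = y.val := by omega
    have hmod : (5 * y.val + z.val) % 5 = z.val := by omega
    have hbit : (sameColor c).testBit (5 * y.val + z.val) = true :=
      testBit_maskOf.mpr ⟨5 * y.val + z.val, by simp; omega, by rwa [hdiv, hmod], rfl⟩
    have := congrArg (Nat.testBit · (5 * y.val + z.val)) hc
    simp [Nat.testBit_and, hyz, hbit] at this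

/-- Runs through the orders by right endpoint of the edges outside `used`. Here `A` holds the
edges meeting every used edge, among which are all edges lying right of every used edge, and `m`
the pairs `(y, z)` such that some used edge `xy` may lie left of `xz` (`mT`: the same pairs
transposed). An order is followed only while its next edge can have an edge right of it. -/
def orderSearch : ℕ → ℕ → ℕ → ℕ → ℕ → Bool
  | 0, _, _, m, mT => twoWayColorable m mT
  | n + 1, used, A, m, mT => twoWayColorable m mT && codes.all fun p =>
      used.testBit p || A &&& nbr p == 0 ||
        orderSearch n (used ||| 1 <<< p) (A &&& nbr p) (m ||| dirsFrom p (A &&& nbr p))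
          (mT ||| dirsTo p (A &&& nbr p))

theorem orderSearch_root :
    orderSearch 9 (0 ||| 1 <<< 1) (allCodes &&& nbr 1) (0 ||| dirsFrom 1 (allCodes &&& nbr 1))
      (0 ||| dirsTo 1 (allCodes &&& nbr 1)) = true := by
  decide +kernel

theorem exists_perm_zero_one {x y : Fin 5} (hxy : x ≠ y) :
    ∃ σ : Equiv.Perm (Fin 5), σ 0 = x ∧ σ 1 = y := by
  set t := Equiv.swap 0 x y
  have ht : t ≠ 0 := by simpa [t, Equiv.swap_apply_eq_iff] using hxy.symm
  refine ⟨Equiv.swap 0 x * Equiv.swap 1 t, ?_, ?_⟩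
  · simp [Equiv.swap_apply_of_ne_of_ne (Fin.zero_ne_one) ht.symm]
  · simp [t]

namespace Layer

variable {L : Layer}

theorem meets_of_lt {a b : ℕ} (ha : a ∈ codes) (hb : b ∈ codes)
    (h : L.u (edge a) < L.l (edge b)) : Meets a b := by
  by_contra hm
  by_cases hab : a = b
  · subst hab
    exact (L.l_le_u _).not_gt h
  obtain ⟨h1, h2, h3, h4, h5, h6⟩ := letters_ne_of_not_meets a ha b hb hab hm
  exact (L.overlap _ _ _ _ h1 h2 h3 h4 h5 h6).not_gt h

variable (L) in
/-- The state of `orderSearch` along the order of the edges by right endpoint, `rest` being the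
edges still to come. -/
structure SearchInv (rest : List ℕ) (used A m mT : ℕ) : Prop where
  nodup : rest.Nodup
  subset : rest ⊆ codes
  sorted : rest.Pairwise fun a b => L.u (edge a) ≤ L.u (edge b)
  fresh : ∀ a ∈ rest, used.testBit a = false
  used_or_mem : ∀ a ∈ codes, used.testBit a = true ∨ a ∈ rest
  le_rest : ∀ a ∈ codes, used.testBit a = true → ∀ b ∈ rest, L.u (edge a) ≤ L.u (edge b)
  active : ∀ b ∈ codes, (∀ a ∈ codes, used.testBit a = true → L.u (edge a) < L.l (edge b)) →
    A.testBit b = true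
  recorded : ∀ a ∈ codes, used.testBit a = true → ∀ b ∈ codes, L.u (edge a) < L.l (edge b) →
    m.testBit (dir a b) = true ∧ mT.testBit (dir b a) = true

theorem SearchInv.step {p : ℕ} {rest : List ℕ} {used A m mT : ℕ}
    (h : L.SearchInv (p :: rest) used A m mT) :
    L.SearchInv rest (used ||| 1 <<< p) (A &&& nbr p) (m ||| dirsFrom p (A &&& nbr p))
      (mT ||| dirsTo p (A &&& nbr p)) := by
  have hp : p ∈ codes := h.subset List.mem_cons_self
  have hp_rest : p ∉ rest := (List.nodup_cons.mp h.nodup).1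
  have hused (a : ℕ) : (used ||| 1 <<< p).testBit a = true ↔ used.testBit a = true ∨ a = p := by
    rw [Nat.testBit_or, Bool.or_eq_true, Nat.one_shiftLeft, Nat.testBit_two_pow,
      decide_eq_true_iff, eq_comm (a := p)]
  have active : ∀ b ∈ codes, (∀ a ∈ codes, (used ||| 1 <<< p).testBit a = true →
      L.u (edge a) < L.l (edge b)) → (A &&& nbr p).testBit b = true := fun b hb hlt => by
    have hA := h.active b hb fun a ha hua => hlt a ha ((hused a).mpr (.inl hua))
    have hN : (nbr p).testBit b = true :=
      testBit_maskOf.mpr ⟨b, hb, meets_of_lt hp hb (hlt p hp ((hused p).mpr (.inr rfl))), rfl⟩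
    rw [Nat.testBit_and, hA, hN]
    rfl
  refine ⟨(List.nodup_cons.mp h.nodup).2, fun a ha => h.subset (List.mem_cons_of_mem _ ha),
    (List.pairwise_cons.mp h.sorted).2, fun a ha => ?_, fun a ha => ?_, fun a ha hua b hb => ?_,
    active, fun a ha hua b hb hlt => ?_⟩
  · have : a ≠ p := fun hap => hp_rest (hap ▸ ha)
    simpa [Nat.one_shiftLeft, Nat.testBit_two_pow, Ne.symm this] using
      h.fresh a (List.mem_cons_of_mem _ ha)
  · rcases h.used_or_mem a ha with hua | hmem
    · exact .inl ((hused a).mpr (.inl hua))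
    · rcases List.mem_cons.mp hmem with rfl | hmem
      · exact .inl ((hused a).mpr (.inr rfl))
      · exact .inr hmem
  · rcases (hused a).mp hua with hua | rfl
    · exact h.le_rest a ha hua b (List.mem_cons_of_mem _ hb)
    · exact (List.pairwise_cons.mp h.sorted).1 b hb
  · rcases (hused a).mp hua with hua | rfl
    · obtain ⟨h1, h2⟩ := h.recorded a ha hua b hb hlt
      simp [Nat.testBit_or, h1, h2]
    · have hb' := active b hb fun a' ha' hua' => by
        rcases (hused a').mp hua' with hua' | rfl
        · exact (h.le_rest a' ha' hua' a List.mem_cons_self).trans_lt hlt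
        · exact hlt
      have h1 : (dirsFrom a (A &&& nbr a)).testBit (dir a b) = true :=
        testBit_maskOf.mpr ⟨b, hb, hb', rfl⟩
      have h2 : (dirsTo a (A &&& nbr a)).testBit (dir b a) = true :=
        testBit_maskOf.mpr ⟨b, hb, hb', rfl⟩
      simp [Nat.testBit_or, h1, h2]

theorem SearchInv.not_lt_of_eq_zero {p : ℕ} {rest : List ℕ} {used A m mT : ℕ}
    (h : L.SearchInv (p :: rest) used A m mT) (h0 : A &&& nbr p = 0) :
    ∀ a ∈ p :: rest, ∀ b ∈ codes, ¬L.u (edge a) < L.l (edge b) := by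
  intro a ha b hb hlt
  have hp : p ∈ codes := h.subset List.mem_cons_self
  have hpa : L.u (edge p) ≤ L.u (edge a) := by
    rcases List.mem_cons.mp ha with rfl | ha
    · exact le_rfl
    · exact (List.pairwise_cons.mp h.sorted).1 a ha
  have hpb := hpa.trans_lt hlt
  have hA := h.active b hb fun a' ha' hua' =>
    (h.le_rest a' ha' hua' p List.mem_cons_self).trans_lt hpb
  have hN : (nbr p).testBit b = true := testBit_maskOf.mpr ⟨b, hb, meets_of_lt hp hb hpb, rfl⟩
  have := Nat.testBit_and A (nbr p) b
  simp [h0, hA, hN] at this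

theorem SearchInv.colorable {rest : List ℕ} {used A m mT : ℕ} (h : L.SearchInv rest used A m mT)
    (hrest : ∀ a ∈ rest, ∀ b ∈ codes, ¬L.u (edge a) < L.l (edge b))
    (hm : twoWayColorable m mT = true) (hsep : ∀ y z, y ≠ z → L.Sep y z ∨ L.Sep z y) :
    L.twoWayGraph.Colorable 2 := by
  have hrec : ∀ y z, L.Sep y z →
      m.testBit (5 * y.val + z.val) = true ∧ mT.testBit (5 * z.val + y.val) = true := by
    rintro y z ⟨x, hxy, hxz, hlt⟩
    have hyz : y ≠ z := by rintro rfl; exact L.not_sep_self y ⟨x, hxy, hxz, hlt⟩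
    have ha := code_mem x y hxy
    have hb := code_mem x z hxz
    rw [SepAt, ← edge_code x y, ← edge_code x z] at hlt
    have hused := (h.used_or_mem _ ha).resolve_right fun hmem => hrest _ hmem _ hb hlt
    rw [← dir_code x y z hxy hxz hyz, ← dir_code x z y hxz hxy hyz.symm]
    exact h.recorded _ ha hused _ hb hlt
  obtain ⟨c, hc⟩ := exists_coloring_of_twoWayColorable hm fun y z hyz => by
    rcases hsep y z hyz with hs | hs
    · simp [Nat.testBit_or, (hrec y z hs).1]
    · simp [Nat.testBit_or, (hrec z y hs).2]
  simpa using (SimpleGraph.Coloring.mk c fun {y z} hyz =>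
    hc y z (by simp [Nat.testBit_and, (hrec y z hyz.1).1, (hrec z y hyz.2).2])).colorable

theorem SearchInv.colorable_of_orderSearch (hsep : ∀ y z, y ≠ z → L.Sep y z ∨ L.Sep z y) :
    ∀ {rest : List ℕ} {used A m mT : ℕ}, L.SearchInv rest used A m mT →
      orderSearch rest.length used A m mT = true → L.twoWayGraph.Colorable 2
  | [], _, _, _, _, h, hs => h.colorable (by simp) hs hsep
  | p :: rest, used, A, m, mT, h, hs => by
    simp only [List.length_cons, orderSearch, Bool.and_eq_true, List.all_eq_true] at hs
    by_cases h0 : A &&& nbr p = 0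
    · exact h.colorable (h.not_lt_of_eq_zero h0) hs.1 hsep
    · refine h.step.colorable_of_orderSearch hsep ?_
      simpa [h.fresh p List.mem_cons_self, h0] using hs.2 p (h.subset List.mem_cons_self)

theorem twoWayGraph_colorable_of_forall_le (hmin : ∀ b ∈ codes, L.u (edge 1) ≤ L.u (edge b))
    (hsep : ∀ y z, y ≠ z → L.Sep y z ∨ L.Sep z y) : L.twoWayGraph.Colorable 2 := by
  let le (a b : ℕ) : Bool := decide (L.u (edge a) ≤ L.u (edge b))
  have hperm : (1 :: (codes.erase 1).mergeSort le).Perm codes :=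
    ((List.mergeSort_perm _ _).cons 1).trans (List.perm_cons_erase (by decide)).symm
  have hsorted := List.pairwise_mergeSort (le := le)
    (fun a b c hab hbc => by simp only [le, decide_eq_true_eq] at *; exact hab.trans hbc)
    (fun a b => by rcases le_total (L.u (edge a)) (L.u (edge b)) with h | h <;> simp [le, h])
    (codes.erase 1)
  have hmem (a : ℕ) : a ∈ 1 :: (codes.erase 1).mergeSort le ↔ a ∈ codes := hperm.mem_iff
  have hinit : L.SearchInv (1 :: (codes.erase 1).mergeSort le) 0 allCodes 0 0 :=
    { nodup := hperm.nodup_iff.mpr (by decide)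
      subset := fun a ha => (hmem a).mp ha
      sorted := List.pairwise_cons.mpr ⟨fun b hb => hmin b ((hmem b).mp (.tail _ hb)),
        hsorted.imp fun h => by simpa [le] using h⟩
      fresh := fun a _ => Nat.zero_testBit a
      used_or_mem := fun a ha => .inr ((hmem a).mpr ha)
      le_rest := fun a _ h => by simp at h
      active := fun b hb _ => testBit_maskOf.mpr ⟨b, hb, trivial, rfl⟩
      recorded := fun a _ h => by simp at h }
  refine hinit.step.colorable_of_orderSearch hsep ?_
  rw [List.length_mergeSort, List.length_erase_of_mem (by decide)]
  exact orderSearch_root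

theorem twoWayGraph_colorable (hsep : ∀ y z, y ≠ z → L.Sep y z ∨ L.Sep z y) :
    L.twoWayGraph.Colorable 2 := by
  obtain ⟨a, ha, hmin⟩ := codes.toFinset.exists_min_image (fun a => L.u (edge a)) ⟨1, by decide⟩
  rw [List.mem_toFinset] at ha
  obtain ⟨σ, hσ0, hσ1⟩ := exists_perm_zero_one (fst_ne_snd a ha)
  have hmin' (b : ℕ) (hb : b ∈ codes) : (L.comap σ).u (edge 1) ≤ (L.comap σ).u (edge b) := by
    have hb' := code_mem _ _ (σ.injective.ne (fst_ne_snd b hb))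
    calc (L.comap σ).u (edge 1) = L.u s(σ 0, σ 1) := rfl
      _ = L.u (edge a) := by rw [hσ0, hσ1]; rfl
      _ ≤ L.u (edge (code (σ (fst b)) (σ (snd b)))) := hmin _ (List.mem_toFinset.mpr hb')
      _ = (L.comap σ).u (edge b) := by rw [edge_code]; rfl
  refine .of_hom (twoWayGraphComapIso σ).toHom
    (twoWayGraph_colorable_of_forall_le hmin' fun y z hyz => ?_)
  simpa only [sep_comap] using hsep (σ y) (σ z) (σ.injective.ne hyz)

end Layer

theorem exists_three_ne : ∀ y z : Fin 5, ∃ a b c : Fin 5,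
    a ≠ b ∧ a ≠ c ∧ b ≠ c ∧ a ≠ y ∧ a ≠ z ∧ b ≠ y ∧ b ≠ z ∧ c ≠ y ∧ c ≠ z := by
  decide

theorem false_of_unique_cover {y z : Fin 5} {P Q : Fin 5 → Prop}
    (hP : ∀ x w, P x → P w → x = w) (hQ : ∀ x w, Q x → Q w → x = w)
    (h : ∀ x, x ≠ y → x ≠ z → P x ∨ Q x) : False := by
  obtain ⟨a, b, c, hab, hac, hbc, hay, haz, hby, hbz, hcy, hcz⟩ := exists_three_ne y z
  rcases h a hay haz with ha | ha <;> rcases h b hby hbz with hb | hb <;>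
    rcases h c hcy hcz with hc | hc
  all_goals first
    | exact hab (hP _ _ ha hb) | exact hac (hP _ _ ha hc) | exact hbc (hP _ _ hb hc)
    | exact hab (hQ _ _ ha hb) | exact hac (hQ _ _ ha hc) | exact hbc (hQ _ _ hb hc)

section Cover

variable (L : Fin 2 → Layer)
  (hcover : ∀ x y z, x ≠ y → x ≠ z → y ≠ z → ∃ i, (L i).SepAt x y z ∨ (L i).SepAt x z y)
include hcover

theorem sep_or_sep_of_cover (i : Fin 2) {y z : Fin 5} (hyz : y ≠ z) :
    (L i).Sep y z ∨ (L i).Sep z y := by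
  by_contra! hi
  have other : ∀ i j j' : Fin 2, j ≠ i → j' ≠ i → j = j' := by decide
  refine false_of_unique_cover (y := y) (z := z)
    (P := fun x => ∃ j ≠ i, x ≠ y ∧ x ≠ z ∧ (L j).SepAt x y z)
    (Q := fun x => ∃ j ≠ i, x ≠ y ∧ x ≠ z ∧ (L j).SepAt x z y) ?_ ?_ fun x hxy hxz => ?_
  · rintro x w ⟨j, hj, hxy, hxz, hx⟩ ⟨j', hj', hwy, hwz, hw⟩
    obtain rfl := other i j j' hj hj'
    exact (L j).eq_of_sepAt hxy hxz hwy hwz hyz hx hw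
  · rintro x w ⟨j, hj, hxy, hxz, hx⟩ ⟨j', hj', hwy, hwz, hw⟩
    obtain rfl := other i j j' hj hj'
    exact (L j).eq_of_sepAt hxz hxy hwz hwy hyz.symm hx hw
  obtain ⟨j, hj⟩ := hcover x y z hxy hxz hyz
  have hji : j ≠ i := by
    rintro rfl
    rcases hj with hj | hj
    exacts [hi.1 ⟨x, hxy, hxz, hj⟩, hi.2 ⟨x, hxz, hxy, hj⟩]
  rcases hj with hj | hj
  exacts [.inl ⟨j, hji, hxy, hxz, hj⟩, .inr ⟨j, hji, hxy, hxz, hj⟩]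

theorem false_of_cover : False := by
  obtain ⟨c₀⟩ := (L 0).twoWayGraph_colorable fun y z => sep_or_sep_of_cover L hcover 0
  obtain ⟨c₁⟩ := (L 1).twoWayGraph_colorable fun y z => sep_or_sep_of_cover L hcover 1
  obtain ⟨y, z, hyz, hc⟩ := Fintype.exists_ne_map_eq_of_card_lt (fun y => (c₀ y, c₁ y)) (by simp)
  simp only [Prod.mk.injEq] at hc
  refine false_of_unique_cover (y := y) (z := z)
    (P := fun x => x ≠ y ∧ x ≠ z ∧ ((L 0).SepAt x y z ∨ (L 0).SepAt x z y))
    (Q := fun x => x ≠ y ∧ x ≠ z ∧ ((L 1).SepAt x y z ∨ (L 1).SepAt x z y))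
    (fun x w => Layer.eq_of_sepAt_or hyz fun h => c₀.valid h hc.1)
    (fun x w => Layer.eq_of_sepAt_or hyz fun h => c₁.valid h hc.2) fun x hxy hxz => ?_
  obtain ⟨i, hi⟩ := hcover x y z hxy hxz hyz
  fin_cases i
  exacts [.inl ⟨hxy, hxz, hi⟩, .inr ⟨hxy, hxz, hi⟩]

end Cover

theorem compl_lineGraph_adj {x y z w : Fin 5} (hxy : x ≠ y) (hzw : z ≠ w) :
    (⊤ : SimpleGraph (Fin 5)).lineGraphᶜ.Adj ⟨s(x, y), by simpa using hxy⟩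
      ⟨s(z, w), by simpa using hzw⟩ ↔ x ≠ z ∧ x ≠ w ∧ y ≠ z ∧ y ≠ w := by
  rw [compl_adj, lineGraph_adj_iff_exists]
  simp only [ne_eq, Subtype.mk.injEq, Sym2.eq_iff, Sym2.mem_iff]
  revert x y z w
  decide

theorem exists_layers {d : ℕ} {I : (⊤ : SimpleGraph (Fin 5)).edgeSet → Fin d → Set ℝ}
    (h : (⊤ : SimpleGraph (Fin 5)).lineGraphᶜ.IsBoxRep d I) :
    ∃ L : Fin d → Layer, ∀ x y z : Fin 5, x ≠ y → x ≠ z → y ≠ z →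
      ∃ i, (L i).SepAt x y z ∨ (L i).SepAt x z y := by
  classical
  obtain ⟨l, u, hlu, hadj⟩ := h.exists_endpoints
  have mem {x y : Fin 5} (hxy : x ≠ y) : s(x, y) ∈ (⊤ : SimpleGraph (Fin 5)).edgeSet := by
    simpa using hxy
  let ext (f : (⊤ : SimpleGraph (Fin 5)).edgeSet → Fin d → ℝ) (i : Fin d) (e : Sym2 (Fin 5)) :
      ℝ :=
    if he : e ∈ (⊤ : SimpleGraph (Fin 5)).edgeSet then f ⟨e, he⟩ i else 0
  have ext_mk (f) (i) {x y : Fin 5} (hxy : x ≠ y) : ext f i s(x, y) = f ⟨_, mem hxy⟩ i :=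
    dif_pos (mem hxy)
  refine ⟨fun i => ⟨ext l i, ext u i, fun e => ?_, fun x y z w hxy hxz hxw hyz hyw hzw => ?_⟩,
    fun x y z hxy hxz hyz => ?_⟩
  · unfold ext
    split_ifs
    exacts [hlu _ _, le_rfl]
  · rw [ext_mk l i hxy, ext_mk u i hzw]
    have hP := (compl_lineGraph_adj hxy hzw).mpr ⟨hxz, hxw, hyz, hyw⟩
    exact ((hadj _ _ hP.ne).mp hP i).1
  · have hne : (⟨_, mem hxy⟩ : (⊤ : SimpleGraph (Fin 5)).edgeSet) ≠ ⟨_, mem hxz⟩ := by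
      simp [hyz, hxz]
    have hnadj := mt (compl_lineGraph_adj hxy hxz).mp fun h => h.1 rfl
    rw [hadj _ _ hne] at hnadj
    push Not at hnadj
    obtain ⟨i, hi⟩ := hnadj
    refine ⟨i, ?_⟩
    simp only [Layer.SepAt, ext_mk _ _ hxy, ext_mk _ _ hxz]
    rcases le_or_gt (l ⟨_, mem hxy⟩ i) (u ⟨_, mem hxz⟩ i) with h | h
    · exact .inl (hi h)
    · exact .inr h

end Petersen

/-- The boxicity of the complement of `L(K_5)` (the Petersen graph) is at least `3`. -/
theorem boxicity_compl_lineGraph_complete_five :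
    3 ≤ ((⊤ : SimpleGraph (Fin 5)).lineGraph)ᶜ.boxicity := by
  by_contra! h
  obtain ⟨I, hI⟩ :=
    SimpleGraph.exists_isBoxRep_boxicity (G := ((⊤ : SimpleGraph (Fin 5)).lineGraph)ᶜ)
  obtain ⟨J, hJ⟩ := hI.exists_of_le (Nat.le_of_lt_succ h)
  obtain ⟨L, hL⟩ := Petersen.exists_layers hJ
  exact Petersen.false_of_cover L hL
end

section
/- Let G be a finite simple graph and let H be a spanning subgraph of the complement of the line graph L(G) having k edges. Then there exists an interval-order subgraph of the complement of L(G) whose edge set contains at least k/3 edges of H. -/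
/-!
Put the vertices of `G` on the line in a uniformly random order and let every edge occupy the
interval spanned by its two endpoints. Edges with disjoint intervals share no vertex, and
"disjoint intervals" is an interval-order graph on the edges. For two vertex-disjoint edges `ab`
and `cd`, the order separates exactly one of the three pairings `ab|cd`, `ac|bd`, `ad|bc` of
`{a, b, c, d}`, and relabelling the vertices by a transposition permutes the pairings, so `ab|cd`
is separated by a third of all orders. Averaging over the orders, some order keeps at least a third
of the edges of `H`.
-/

open Finset Function

section PairsSeparated

variable {α : Type*} [LinearOrder α]

def PairsSeparated (x y z t : α) : Prop :=
  max x y < min z t ∨ max z t < min x y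

instance (x y z t : α) : Decidable (PairsSeparated x y z t) :=
  inferInstanceAs (Decidable (_ ∨ _))

theorem pairsSeparated_comm_right {x y z t : α} :
    PairsSeparated x y z t ↔ PairsSeparated x y t z := by
  simp only [PairsSeparated, max_comm z t, min_comm z t]

theorem not_pairsSeparated_and_pairsSeparated (x y z t : α) :
    ¬(PairsSeparated x y z t ∧ PairsSeparated x z y t) := by
  simp only [PairsSeparated, max_lt_iff, lt_min_iff]
  rintro ⟨h | h, h' | h'⟩ <;> order

theorem pairsSeparated_or {x y z t : α} (hxy : x ≠ y) (hxz : x ≠ z) (hxt : x ≠ t) (hyz : y ≠ z)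
    (hyt : y ≠ t) (hzt : z ≠ t) :
    PairsSeparated x y z t ∨ PairsSeparated x z y t ∨ PairsSeparated x t y z := by
  simp only [PairsSeparated, max_lt_iff, lt_min_iff]
  rcases hxy.lt_or_gt with h1 | h1 <;> rcases hxz.lt_or_gt with h2 | h2 <;>
    rcases hxt.lt_or_gt with h3 | h3 <;> rcases hyz.lt_or_gt with h4 | h4 <;>
    rcases hyt.lt_or_gt with h5 | h5 <;> rcases hzt.lt_or_gt with h6 | h6 <;>
    first
    | exfalso; order
    | simp [h1, h2, h3, h4, h5, h6, h1.asymm, h2.asymm, h3.asymm, h4.asymm, h5.asymm, h6.asymm]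

theorem card_perm_eq_three_mul_card_pairsSeparated {V : Type*} [Fintype V] [DecidableEq V]
    {w : V → α} (hw : Injective w) {a b c d : V} (hab : a ≠ b) (hac : a ≠ c) (had : a ≠ d)
    (hbc : b ≠ c) (hbd : b ≠ d) (hcd : c ≠ d) :
    Fintype.card (Equiv.Perm V) =
      3 * #{σ : Equiv.Perm V | PairsSeparated (w (σ a)) (w (σ b)) (w (σ c)) (w (σ d))} := by
  set T := fun p q r s : V =>
    ({σ : Equiv.Perm V | PairsSeparated (w (σ p)) (w (σ q)) (w (σ r)) (w (σ s))} :
      Finset (Equiv.Perm V))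
  have hswap : ∀ {q r}, a ≠ q → a ≠ r → ∀ s, s ≠ q → s ≠ r → #(T a q r s) = #(T a r q s) := by
    intro q r haq har s hsq hsr
    refine card_equiv (Equiv.mulRight (Equiv.swap q r)) fun σ => ?_
    simp [T, Equiv.swap_apply_of_ne_of_ne, haq, har, hsq, hsr]
  have hunion : (univ : Finset (Equiv.Perm V)) = T a b c d ∪ T a c b d ∪ T a d b c := by
    ext σ
    simpa [T, or_assoc] using pairsSeparated_or (hw.ne (σ.injective.ne hab))
      (hw.ne (σ.injective.ne hac)) (hw.ne (σ.injective.ne had)) (hw.ne (σ.injective.ne hbc))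
      (hw.ne (σ.injective.ne hbd)) (hw.ne (σ.injective.ne hcd))
  have hdisj : ∀ p q r s, Disjoint (T p q r s) (T p r q s) := fun p q r s =>
    disjoint_filter.2 fun σ _ h h' => not_pairsSeparated_and_pairsSeparated _ _ _ _ ⟨h, h'⟩
  have hcomm : ∀ p q r s, T p q r s = T p q s r := fun p q r s =>
    filter_congr fun σ _ => pairsSeparated_comm_right
  change _ = 3 * #(T a b c d)
  rw [← card_univ, hunion, card_union_of_disjoint, card_union_of_disjoint (hdisj a b c d),
    ← hswap hab hac d hbd.symm hcd.symm, ← hswap hab had c hbc.symm hcd, ← hcomm]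
  · ring
  · refine disjoint_union_left.2 ⟨?_, ?_⟩
    · simpa only [hcomm a b c d] using hdisj a b d c
    · simpa only [hcomm a c b d, hcomm a d c b] using hdisj a c d b

end PairsSeparated

theorem Finset.exists_card_le_mul_card_filter {ι β : Type*} [Fintype ι] [Nonempty ι]
    (s : Finset β) (P : ι → β → Prop) [∀ i b, Decidable (P i b)] (n : ℕ)
    (h : ∀ b ∈ s, Fintype.card ι ≤ n * #{i | P i b}) :
    ∃ i, #s ≤ n * #{b ∈ s | P i b} := by
  suffices ∑ _i : ι, #s ≤ ∑ i, n * #{b ∈ s | P i b} by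
    obtain ⟨i, -, hi⟩ := exists_le_of_sum_le univ_nonempty this
    exact ⟨i, hi⟩
  calc ∑ _i : ι, #s = ∑ _b ∈ s, Fintype.card ι := by simp [mul_comm]
    _ ≤ ∑ b ∈ s, n * #{i | P i b} := sum_le_sum h
    _ = ∑ i, n * #{b ∈ s | P i b} := by
      simp only [← mul_sum]
      exact congrArg (n * ·) (sum_card_bipartiteAbove_eq_sum_card_bipartiteBelow (r := P)).symm

theorem Sym2.inf_le_of_mem {α : Type*} [Lattice α] {s : Sym2 α} {a : α} (h : a ∈ s) :
    s.inf ≤ a := by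
  induction s using Sym2.ind
  rcases Sym2.mem_iff.1 h with rfl | rfl <;> simp

theorem Sym2.le_sup_of_mem {α : Type*} [Lattice α] {s : Sym2 α} {a : α} (h : a ∈ s) :
    a ≤ s.sup := by
  induction s using Sym2.ind
  rcases Sym2.mem_iff.1 h with rfl | rfl <;> simp

namespace SimpleGraph

variable {ι V : Type*}

def intervalOrderGraph (lo hi : ι → ℝ) : SimpleGraph ι :=
  fromRel fun i j => hi i < lo j

theorem intervalOrderGraph_adj {lo hi : ι → ℝ} {i j : ι} :
    (intervalOrderGraph lo hi).Adj i j ↔ i ≠ j ∧ (hi i < lo j ∨ hi j < lo i) :=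
  fromRel_adj _ i j

theorem isIntervalOrderGraph_intervalOrderGraph {lo hi : ι → ℝ} (h : ∀ i, lo i ≤ hi i) :
    (intervalOrderGraph lo hi).IsIntervalOrderGraph := by
  refine ⟨fun i => Set.Icc (lo i) (hi i), fun i => ⟨_, _, h i, rfl⟩, fun i j hij => ?_⟩
  rw [compl_adj, intervalOrderGraph_adj, Set.Icc_inter_Icc, Set.nonempty_Icc]
  simp only [max_le_iff, le_min_iff, h, true_and, and_true, ne_eq, hij, not_false_eq_true,
    not_or, not_lt]

noncomputable def separatedEdgesGraph (G : SimpleGraph V) (g : V → ℝ) : SimpleGraph G.edgeSet :=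
  intervalOrderGraph (fun e => ((e : Sym2 V).map g).inf) (fun e => ((e : Sym2 V).map g).sup)

variable (G : SimpleGraph V)

theorem isIntervalOrderGraph_separatedEdgesGraph (g : V → ℝ) :
    (G.separatedEdgesGraph g).IsIntervalOrderGraph :=
  isIntervalOrderGraph_intervalOrderGraph fun _ => Sym2.inf_le_sup _

theorem separatedEdgesGraph_le_compl_lineGraph (g : V → ℝ) :
    G.separatedEdgesGraph g ≤ G.lineGraphᶜ := by
  intro e f h
  obtain ⟨hef, hsep⟩ := intervalOrderGraph_adj.1 h
  refine compl_adj _ _ _ |>.2 ⟨hef, fun hadj => ?_⟩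
  obtain ⟨-, v, hve, hvf⟩ := lineGraph_adj_iff_exists.1 hadj
  have hve' : g v ∈ (e : Sym2 V).map g := Sym2.mem_map.2 ⟨v, hve, rfl⟩
  have hvf' : g v ∈ (f : Sym2 V).map g := Sym2.mem_map.2 ⟨v, hvf, rfl⟩
  rcases hsep with hlt | hlt
  · exact hlt.not_ge ((Sym2.inf_le_of_mem hvf').trans (Sym2.le_sup_of_mem hve'))
  · exact hlt.not_ge ((Sym2.inf_le_of_mem hve').trans (Sym2.le_sup_of_mem hvf'))

theorem separatedEdgesGraph_adj_iff {g : V → ℝ} {e f : G.edgeSet} (hef : e ≠ f) {a b c d : V}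
    (he : (e : Sym2 V) = s(a, b)) (hf : (f : Sym2 V) = s(c, d)) :
    (G.separatedEdgesGraph g).Adj e f ↔ PairsSeparated (g a) (g b) (g c) (g d) := by
  simp [separatedEdgesGraph, intervalOrderGraph_adj, hef, he, hf, PairsSeparated]

open Classical in
theorem card_perm_eq_three_mul_card_mem_edgeSet_separatedEdgesGraph [Fintype V]
    {w : V → ℝ} (hw : Injective w) {p : Sym2 G.edgeSet} (hp : p ∈ G.lineGraphᶜ.edgeSet) :
    Fintype.card (Equiv.Perm V) =
      3 * #{σ : Equiv.Perm V | p ∈ (G.separatedEdgesGraph (w ∘ σ)).edgeSet} := by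
  induction p using Sym2.ind with | _ e f
  obtain ⟨hef, hdisjoint⟩ := (compl_adj _ _ _).1 hp
  rcases e with ⟨e, he⟩
  rcases f with ⟨f, hf⟩
  induction e using Sym2.ind with | _ a b
  induction f using Sym2.ind with | _ c d
  dsimp only at hef hdisjoint ⊢
  have hshared : ∀ v, v ∈ s(a, b) → v ∉ s(c, d) := fun v hve hvf =>
    hdisjoint (lineGraph_adj_iff_exists.2 ⟨hef, v, hve, hvf⟩)
  have hab : a ≠ b := G.ne_of_adj he
  have hcd : c ≠ d := G.ne_of_adj hf
  have hac : a ≠ c := fun h => hshared a (by simp) (by simp [h])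
  have had : a ≠ d := fun h => hshared a (by simp) (by simp [h])
  have hbc : b ≠ c := fun h => hshared b (by simp) (by simp [h])
  have hbd : b ≠ d := fun h => hshared b (by simp) (by simp [h])
  rw [card_perm_eq_three_mul_card_pairsSeparated hw hab hac had hbc hbd hcd]
  congr 2
  exact filter_congr fun σ _ => (G.separatedEdgesGraph_adj_iff (g := w ∘ σ) hef rfl rfl).symm

end SimpleGraph

/-- If `H` is a (spanning) subgraph of the complement of the line graph of `G` with `k` edges,
then some interval-order subgraph of the complement of `L(G)` contains at least `k/3` of the
edges of `H`. -/
theorem exists_intervalOrder_subgraph_covering_third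
    {V : Type*} [Fintype V] (G : SimpleGraph V) (H : SimpleGraph G.edgeSet) (k : ℕ)
    (hle : H ≤ (G.lineGraph)ᶜ) (hk : H.edgeSet.ncard = k) :
    ∃ C : SimpleGraph G.edgeSet, C ≤ (G.lineGraph)ᶜ ∧ C.IsIntervalOrderGraph ∧
      (k : ℝ) / 3 ≤ ((H.edgeSet ∩ C.edgeSet).ncard : ℝ) := by
  classical
  obtain ⟨w, hw⟩ : ∃ w : V → ℝ, Injective w :=
    ⟨_, Nat.cast_injective.comp (Fin.val_injective.comp (Fintype.equivFin V).injective)⟩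
  obtain ⟨σ, hσ⟩ := exists_card_le_mul_card_filter H.edgeFinset
    (fun (σ : Equiv.Perm V) p => p ∈ (G.separatedEdgesGraph (w ∘ σ)).edgeSet) 3
    fun p hp => (G.card_perm_eq_three_mul_card_mem_edgeSet_separatedEdgesGraph hw
      (SimpleGraph.edgeSet_mono hle (SimpleGraph.mem_edgeFinset.1 hp))).le
  refine ⟨G.separatedEdgesGraph (w ∘ σ), G.separatedEdgesGraph_le_compl_lineGraph _,
    G.isIntervalOrderGraph_separatedEdgesGraph _, ?_⟩
  have hinter : H.edgeSet ∩ (G.separatedEdgesGraph (w ∘ σ)).edgeSet =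
      ↑{p ∈ H.edgeFinset | p ∈ (G.separatedEdgesGraph (w ∘ σ)).edgeSet} := by
    ext; simp
  rw [hinter, Set.ncard_coe_finset, ← hk, Set.ncard_eq_toFinset_card', div_le_iff₀ three_pos,
    mul_comm]
  exact_mod_cast hσ
end
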